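/- arXiv:2406.02087 — 6 statements merged into one kernel-verified Lean document; each statement's English description precedes it below -/
import Mathlib

section
/- Let φ be a Schwartz function on ℝⁿ and φ_t(x) := t^{-n}φ(x/t). There exists C > 0 depending only on n and φ such that for every ball B(x₀, r), every x ∈ B(x₀, r), every y ∉ B(x₀, 2r), and every t > 0, |∂/∂t(φ_t(x − y))| ≤ C / |y − x₀|^{n+1}. -/
open MeasureTheory Metric

/-- Dilation `φ_t(x) = t^{-n} φ(x/t)` of a Schwartz function. -/
noncomputable def schwartzDil {n : ℕ} (φ : SchwartzMap (EuclideanSpace ℝ (Fin n)) ℝ)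
    (t : ℝ) (x : EuclideanSpace ℝ (Fin n)) : ℝ :=
  t ^ (-(n : ℤ)) * φ (t⁻¹ • x)

/-!
Differentiating in `t` gives `∂ₜ φₜ(v) = -t^{-(n+1)} ψ(v/t)` with `ψ(u) = n φ(u) + Dφ(u) u`,
and `ψ` decays like a Schwartz function. Since `t^{-(n+1)} ‖v‖^{n+1} = ‖v/t‖^{n+1}`, the product
`|∂ₜ φₜ(v)| ‖v‖^{n+1}` is therefore bounded uniformly in `t` and `v`. Finally, for `x ∈ B(x₀, r)`
and `y ∉ B(x₀, 2r)` we have `‖y - x₀‖ ≤ 2 ‖x - y‖`.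
-/

open scoped SchwartzMap

lemma SchwartzMap.exists_pow_mul_abs_smul_add_fderiv_apply_self_le {E : Type*}
    [NormedAddCommGroup E] [NormedSpace ℝ E] (φ : 𝓢(E, ℝ)) (k : ℕ) (c : ℝ) :
    ∃ C > 0, ∀ u, ‖u‖ ^ k * |c * φ u + fderiv ℝ φ u u| ≤ C := by
  obtain ⟨C₀, hC₀, h₀⟩ := φ.decay k 0
  obtain ⟨C₁, hC₁, h₁⟩ := φ.decay (k + 1) 1
  simp only [norm_iteratedFDeriv_zero, norm_iteratedFDeriv_one, Real.norm_eq_abs] at h₀ h₁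
  refine ⟨|c| * C₀ + C₁, by positivity, fun u => ?_⟩
  have hD : |fderiv ℝ φ u u| ≤ ‖fderiv ℝ φ u‖ * ‖u‖ := (fderiv ℝ φ u).le_opNorm u
  calc ‖u‖ ^ k * |c * φ u + fderiv ℝ φ u u|
      ≤ ‖u‖ ^ k * (|c| * |φ u| + ‖fderiv ℝ φ u‖ * ‖u‖) := by
        gcongr
        exact (abs_add_le _ _).trans (by rw [abs_mul]; gcongr)
    _ = |c| * (‖u‖ ^ k * |φ u|) + ‖u‖ ^ (k + 1) * ‖fderiv ℝ φ u‖ := by ring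
    _ ≤ |c| * C₀ + C₁ := by gcongr; exacts [h₀ u, h₁ u]

lemma hasDerivAt_schwartzDil {n : ℕ} (φ : 𝓢(EuclideanSpace ℝ (Fin n), ℝ))
    (v : EuclideanSpace ℝ (Fin n)) {t : ℝ} (ht : t ≠ 0) :
    HasDerivAt (fun s => schwartzDil φ s v)
      (-(t ^ (n + 1))⁻¹ * (n * φ (t⁻¹ • v) + fderiv ℝ φ (t⁻¹ • v) (t⁻¹ • v))) t := by
  have hpow : HasDerivAt (fun s : ℝ => s ^ (-(n : ℤ))) (-(n : ℤ) * t ^ (-(n : ℤ) - 1)) t := by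
    exact_mod_cast hasDerivAt_zpow (-(n : ℤ)) t (Or.inl ht)
  have hinv : HasDerivAt (fun s : ℝ => s⁻¹ • v) (-(t ^ 2)⁻¹ • v) t := by
    simpa using (hasDerivAt_inv ht).smul_const v
  have hcomp :
      HasDerivAt (fun s : ℝ => φ (s⁻¹ • v)) (fderiv ℝ φ (t⁻¹ • v) (-(t ^ 2)⁻¹ • v)) t :=
    (φ.differentiable _).hasFDerivAt.comp_hasDerivAt t hinv
  refine (hpow.mul hcomp).congr_deriv ?_
  have hexp : -(n : ℤ) - 1 = -((n + 1 : ℕ) : ℤ) := by push_cast; ring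
  simp only [map_smul, smul_eq_mul, hexp, zpow_neg, zpow_natCast, Int.cast_natCast]
  field_simp
  ring

lemma abs_deriv_schwartzDil_mul_norm_pow {n : ℕ} (φ : 𝓢(EuclideanSpace ℝ (Fin n), ℝ))
    (v : EuclideanSpace ℝ (Fin n)) {t : ℝ} (ht : 0 < t) :
    |deriv (fun s => schwartzDil φ s v) t| * ‖v‖ ^ (n + 1)
      = ‖t⁻¹ • v‖ ^ (n + 1) * |n * φ (t⁻¹ • v) + fderiv ℝ φ (t⁻¹ • v) (t⁻¹ • v)| := by
  rw [(hasDerivAt_schwartzDil φ v ht.ne').deriv, abs_mul, abs_neg, abs_inv,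
    abs_of_pos (by positivity), norm_smul, Real.norm_eq_abs, abs_inv, abs_of_pos ht, mul_pow,
    inv_pow]
  field_simp

lemma exists_abs_deriv_schwartzDil_mul_norm_pow_le {n : ℕ} (φ : 𝓢(EuclideanSpace ℝ (Fin n), ℝ)) :
    ∃ C > 0, ∀ v, ∀ t > 0, |deriv (fun s => schwartzDil φ s v) t| * ‖v‖ ^ (n + 1) ≤ C := by
  obtain ⟨C, hC, hbound⟩ := φ.exists_pow_mul_abs_smul_add_fderiv_apply_self_le (n + 1) n
  exact ⟨C, hC, fun v t ht => (abs_deriv_schwartzDil_mul_norm_pow φ v ht).trans_le (hbound _)⟩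

lemma dist_le_two_mul_dist_of_mem_ball_of_notMem_ball {X : Type*} [PseudoMetricSpace X]
    {x₀ x y : X} {r : ℝ} (hx : x ∈ ball x₀ r) (hy : y ∉ ball x₀ (2 * r)) :
    dist y x₀ ≤ 2 * dist x y := by
  rw [mem_ball] at hx hy
  linarith [dist_triangle y x x₀, dist_comm x y]

theorem stmt1 (n : ℕ) (φ : SchwartzMap (EuclideanSpace ℝ (Fin n)) ℝ) :
    ∃ C > 0, ∀ (x₀ : EuclideanSpace ℝ (Fin n)) (r : ℝ), 0 < r →
      ∀ x ∈ ball x₀ r, ∀ y ∉ ball x₀ (2 * r), ∀ t : ℝ, 0 < t →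
        |deriv (fun s : ℝ => schwartzDil φ s (x - y)) t| ≤ C / ‖y - x₀‖ ^ (n + 1) := by
  obtain ⟨C, hC, hbound⟩ := exists_abs_deriv_schwartzDil_mul_norm_pow_le φ
  refine ⟨2 ^ (n + 1) * C, by positivity, fun x₀ r hr x hx y hy t ht => ?_⟩
  have hfar := dist_le_two_mul_dist_of_mem_ball_of_notMem_ball hx hy
  rw [dist_eq_norm, dist_eq_norm] at hfar
  have hpos : 0 < ‖y - x₀‖ := by
    rw [mem_ball, dist_eq_norm, not_lt] at hy
    linarith
  rw [le_div_iff₀ (by positivity)]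
  calc |deriv (fun s => schwartzDil φ s (x - y)) t| * ‖y - x₀‖ ^ (n + 1)
      ≤ |deriv (fun s => schwartzDil φ s (x - y)) t| * (2 * ‖x - y‖) ^ (n + 1) := by gcongr
    _ = 2 ^ (n + 1) * (|deriv (fun s => schwartzDil φ s (x - y)) t| * ‖x - y‖ ^ (n + 1)) := by
        ring
    _ ≤ 2 ^ (n + 1) * C := by gcongr; exact hbound _ t ht
end

section
/- Let φ be a Schwartz function on ℝⁿ, {a_i}_{i∈ℤ} a δ-lacunary sequence of positive numbers (a_{i+1}/a_i ≥ δ > 1 for all i), and {v_i}_{i∈ℤ} a bounded sequence of complex numbers. Then there exists C > 0 depending only on n, φ, and ‖v‖_{ℓ∞} (not on N₁, N₂) such that for all integers N₁ < N₂ and all y ≠ 0, |∑_{i=N₁}^{N₂} v_i (φ_{a_{i+1}}(y) − φ_{a_i}(y))| ≤ C / |y|ⁿ. -/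
open MeasureTheory Metric Finset

/-! For `t > 0` and `y ≠ 0` one has `|φ_t(y)| ≤ C_φ |y|⁻ⁿ min(|y|/t, t/|y|)`: for `t ≤ |y|` this is
the decay of order `n + 1` of `φ`, for `t ≥ |y|` it is the bound on `sup |φ|` (with `n ≥ 1`).
Along a `δ`-lacunary sequence the numbers `min(|y|/aᵢ, aᵢ/|y|)` decay geometrically on both sides
of the index where `aᵢ` crosses `|y|`, so their sum over any set of indices is at most
`2 / (1 - δ⁻¹)`; the triangle inequality then bounds the kernel independently of `N₁, N₂`. -/

theorem sum_pow_le_inv_one_sub {ι : Type*} {q : ℝ} (hq₀ : 0 ≤ q) (hq₁ : q < 1)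
    {s : Finset ι} {f : ι → ℕ} (hf : Set.InjOn f s) :
    ∑ i ∈ s, q ^ f i ≤ (1 - q)⁻¹ := by
  classical
  calc ∑ i ∈ s, q ^ f i = ∑ k ∈ s.image f, q ^ k := (sum_image hf).symm
    _ ≤ ∑' k, q ^ k := (summable_geometric_of_lt_one hq₀ hq₁).sum_le_tsum _ fun _ _ ↦ by positivity
    _ = (1 - q)⁻¹ := tsum_geometric_of_lt_one hq₀ hq₁

structure IsLacunary (δ : ℝ) (a : ℤ → ℝ) : Prop where
  pos : ∀ i, 0 < a i
  le_div : ∀ i, δ ≤ a (i + 1) / a i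

namespace IsLacunary

variable {δ : ℝ} {a : ℤ → ℝ}

theorem comp_add_one (ha : IsLacunary δ a) : IsLacunary δ fun i ↦ a (i + 1) :=
  ⟨fun _ ↦ ha.pos _, fun _ ↦ ha.le_div _⟩

theorem inv_comp_neg (ha : IsLacunary δ a) : IsLacunary δ fun i ↦ (a (-i))⁻¹ := by
  refine ⟨fun i ↦ inv_pos.2 (ha.pos _), fun i ↦ ?_⟩
  have := ha.le_div (-(i + 1))
  rwa [show -(i + 1) + 1 = -i by ring, ← inv_div_inv] at this

theorem mul_pow_le (ha : IsLacunary δ a) (hδ : 0 ≤ δ) (i : ℤ) (k : ℕ) :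
    a i * δ ^ k ≤ a (i + k) := by
  induction k with
  | zero => simp
  | succ k ih =>
    have hstep : δ * a (i + k) ≤ a (i + k + 1) := (le_div_iff₀ (ha.pos _)).1 (ha.le_div _)
    calc a i * δ ^ (k + 1) = a i * δ ^ k * δ := pow_succ δ k ▸ (mul_assoc _ _ _).symm
      _ ≤ a (i + k) * δ := by gcongr
      _ ≤ a (i + (k + 1 : ℕ)) := by push_cast; rw [← add_assoc]; linarith

theorem sum_le_of_forall_le (ha : IsLacunary δ a) (hδ : 1 < δ) {s : Finset ℤ} {r : ℝ}
    (hr : 0 ≤ r) (hs : ∀ i ∈ s, a i ≤ r) : ∑ i ∈ s, a i ≤ r * (1 - δ⁻¹)⁻¹ := by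
  rcases s.eq_empty_or_nonempty with rfl | hne
  · have : 0 < 1 - δ⁻¹ := sub_pos.2 (inv_lt_one_of_one_lt₀ hδ)
    simp only [sum_empty]
    positivity
  set M := s.max' hne
  have hδ₀ : 0 < δ := one_pos.trans hδ
  have hterm : ∀ i ∈ s, a i ≤ r * δ⁻¹ ^ (M - i).toNat := by
    intro i hi
    have hgrow := ha.mul_pow_le hδ₀.le i (M - i).toNat
    rw [show i + ((M - i).toNat : ℤ) = M by have := s.le_max' i hi; omega] at hgrow
    rw [inv_pow, ← div_eq_mul_inv, le_div_iff₀ (by positivity)]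
    exact hgrow.trans (hs M (s.max'_mem hne))
  calc ∑ i ∈ s, a i ≤ ∑ i ∈ s, r * δ⁻¹ ^ (M - i).toNat := sum_le_sum hterm
    _ = r * ∑ i ∈ s, δ⁻¹ ^ (M - i).toNat := (mul_sum _ _ _).symm
    _ ≤ r * (1 - δ⁻¹)⁻¹ := by
      refine mul_le_mul_of_nonneg_left (sum_pow_le_inv_one_sub (by positivity)
        (inv_lt_one_of_one_lt₀ hδ) fun i hi j hj hij ↦ ?_) hr
      have := s.le_max' i hi
      have := s.le_max' j hj
      omega

theorem sum_inv_le_of_forall_le (ha : IsLacunary δ a) (hδ : 1 < δ) {s : Finset ℤ} {r : ℝ}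
    (hr : 0 < r) (hs : ∀ i ∈ s, r ≤ a i) : ∑ i ∈ s, (a i)⁻¹ ≤ r⁻¹ * (1 - δ⁻¹)⁻¹ := by
  -- reflected and inverted, the terms above `r` become terms below `r⁻¹`
  have hs' : ∀ i ∈ s.image Neg.neg, (a (-i))⁻¹ ≤ r⁻¹ := by
    simp only [mem_image, forall_exists_index, and_imp]
    rintro _ j hj rfl
    simpa using inv_anti₀ hr (hs j hj)
  simpa [sum_image fun i _ j _ h ↦ neg_injective h] using
    ha.inv_comp_neg.sum_le_of_forall_le hδ (inv_nonneg.2 hr.le) hs'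

theorem sum_min_div_le (ha : IsLacunary δ a) (hδ : 1 < δ) (s : Finset ℤ) {r : ℝ} (hr : 0 < r) :
    ∑ i ∈ s, min (r / a i) (a i / r) ≤ 2 * (1 - δ⁻¹)⁻¹ := by
  rw [← sum_filter_add_sum_filter_not s fun i ↦ a i ≤ r, two_mul]
  gcongr
  · calc _ ≤ ∑ i ∈ s with a i ≤ r, a i / r := sum_le_sum fun _ _ ↦ min_le_right _ _
      _ = (∑ i ∈ s with a i ≤ r, a i) / r := (sum_div _ _ _).symm
      _ ≤ (1 - δ⁻¹)⁻¹ := by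
        rw [div_le_iff₀' hr]
        exact ha.sum_le_of_forall_le hδ hr.le fun i hi ↦ (mem_filter.1 hi).2
  · calc _ ≤ ∑ i ∈ s with ¬a i ≤ r, r * (a i)⁻¹ := sum_le_sum fun _ _ ↦ min_le_left _ _
      _ = r * ∑ i ∈ s with ¬a i ≤ r, (a i)⁻¹ := (mul_sum _ _ _).symm
      _ ≤ r * (r⁻¹ * (1 - δ⁻¹)⁻¹) := by
        gcongr
        exact ha.sum_inv_le_of_forall_le hδ hr fun i hi ↦ (not_le.1 (mem_filter.1 hi).2).le
      _ = (1 - δ⁻¹)⁻¹ := by field_simp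

end IsLacunary

theorem SchwartzMap.norm_pow_mul_norm_le_mul_min {E F : Type*} [NormedAddCommGroup E]
    [NormedSpace ℝ E] [NormedAddCommGroup F] [NormedSpace ℝ F] (φ : SchwartzMap E F) {n : ℕ}
    (hn : n ≠ 0) (x : E) :
    ‖x‖ ^ n * ‖φ x‖ ≤
      (SchwartzMap.seminorm ℝ 0 0 φ + SchwartzMap.seminorm ℝ (n + 1) 0 φ) * min ‖x‖ ‖x‖⁻¹ := by
  have hA := φ.norm_le_seminorm ℝ x
  have hB := φ.norm_pow_mul_le_seminorm ℝ (n + 1) x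
  have hA₀ : 0 ≤ SchwartzMap.seminorm ℝ 0 0 φ := apply_nonneg _ _
  have hB₀ : 0 ≤ SchwartzMap.seminorm ℝ (n + 1) 0 φ := apply_nonneg _ _
  rcases le_total ‖x‖ 1 with hx | hx
  · have hx_le_inv : ‖x‖ ≤ ‖x‖⁻¹ := by
      rcases (norm_nonneg x).eq_or_lt with h | h
      · simp [← h]
      · exact hx.trans ((one_le_inv₀ h).2 hx)
    rw [min_eq_left hx_le_inv]
    calc ‖x‖ ^ n * ‖φ x‖ ≤ ‖x‖ * SchwartzMap.seminorm ℝ 0 0 φ :=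
          mul_le_mul (pow_le_of_le_one (norm_nonneg x) hx hn) hA (norm_nonneg _) (norm_nonneg x)
      _ ≤ _ := by rw [mul_comm]; gcongr; linarith
  · have hx₀ : 0 < ‖x‖ := one_pos.trans_le hx
    rw [min_eq_right ((inv_le_one_of_one_le₀ hx).trans hx)]
    calc ‖x‖ ^ n * ‖φ x‖ = (‖x‖ ^ (n + 1) * ‖φ x‖) * ‖x‖⁻¹ := by
          field_simp; ring
      _ ≤ SchwartzMap.seminorm ℝ (n + 1) 0 φ * ‖x‖⁻¹ := by gcongr
      _ ≤ _ := by gcongr; linarith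

theorem abs_schwartzDil_le {n : ℕ} (φ : SchwartzMap (EuclideanSpace ℝ (Fin n)) ℝ) {t : ℝ}
    (ht : 0 < t) {y : EuclideanSpace ℝ (Fin n)} (hy : y ≠ 0) :
    |schwartzDil φ t y| ≤
      (SchwartzMap.seminorm ℝ 0 0 φ + SchwartzMap.seminorm ℝ (n + 1) 0 φ) / ‖y‖ ^ n *
        min (‖y‖ / t) (t / ‖y‖) := by
  have hn : n ≠ 0 := by
    rintro rfl
    exact hy (Subsingleton.elim _ _)
  have hy₀ : 0 < ‖y‖ := norm_pos_iff.2 hy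
  have hx : ‖t⁻¹ • y‖ = ‖y‖ / t := by
    rw [norm_smul, norm_inv, Real.norm_of_nonneg ht.le, inv_mul_eq_div]
  have key := φ.norm_pow_mul_norm_le_mul_min hn (t⁻¹ • y)
  rw [hx, inv_div, Real.norm_eq_abs] at key
  have hdil : |schwartzDil φ t y| * ‖y‖ ^ n = (‖y‖ / t) ^ n * |φ (t⁻¹ • y)| := by
    rw [schwartzDil, abs_mul, zpow_neg, zpow_natCast, abs_inv, abs_of_pos (by positivity),
      div_pow]
    field_simp
  rwa [div_mul_eq_mul_div, le_div_iff₀ (by positivity), hdil]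

theorem norm_sum_schwartzDil_sub_le {n : ℕ} (φ : SchwartzMap (EuclideanSpace ℝ (Fin n)) ℝ)
    {δ V : ℝ} (hδ : 1 < δ) {a : ℤ → ℝ} (ha : IsLacunary δ a) {v : ℤ → ℂ}
    (hv : ∀ i, ‖v i‖ ≤ V) (s : Finset ℤ) {y : EuclideanSpace ℝ (Fin n)} (hy : y ≠ 0) :
    ‖∑ i ∈ s, v i * ((schwartzDil φ (a (i + 1)) y - schwartzDil φ (a i) y : ℝ) : ℂ)‖ ≤
      V * (SchwartzMap.seminorm ℝ 0 0 φ + SchwartzMap.seminorm ℝ (n + 1) 0 φ) *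
        (4 * (1 - δ⁻¹)⁻¹) / ‖y‖ ^ n := by
  set K := SchwartzMap.seminorm ℝ 0 0 φ + SchwartzMap.seminorm ℝ (n + 1) 0 φ
  set r := ‖y‖
  have hr : 0 < r := norm_pos_iff.2 hy
  have hV : 0 ≤ V := (norm_nonneg _).trans (hv 0)
  set m : ℤ → ℝ := fun i ↦ min (r / a i) (a i / r)
  have hterm : ∀ i, ‖v i * ((schwartzDil φ (a (i + 1)) y - schwartzDil φ (a i) y : ℝ) : ℂ)‖ ≤
      V * (K / r ^ n * (m (i + 1) + m i)) := by
    intro i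
    rw [norm_mul, Complex.norm_real, Real.norm_eq_abs]
    refine mul_le_mul (hv i) ((abs_sub _ _).trans ?_) (abs_nonneg _) hV
    rw [mul_add]
    exact add_le_add (abs_schwartzDil_le φ (ha.pos _) hy) (abs_schwartzDil_le φ (ha.pos _) hy)
  calc _ ≤ ∑ i ∈ s, V * (K / r ^ n * (m (i + 1) + m i)) :=
        (norm_sum_le _ _).trans (sum_le_sum fun i _ ↦ hterm i)
    _ = V * (K / r ^ n) * (∑ i ∈ s, m (i + 1) + ∑ i ∈ s, m i) := by
        simp only [← mul_assoc, ← mul_sum, sum_add_distrib]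
    _ ≤ V * (K / r ^ n) * (2 * (1 - δ⁻¹)⁻¹ + 2 * (1 - δ⁻¹)⁻¹) := by
        gcongr
        exacts [ha.comp_add_one.sum_min_div_le hδ s hr, ha.sum_min_div_le hδ s hr]
    _ = V * K * (4 * (1 - δ⁻¹)⁻¹) / r ^ n := by ring

theorem stmt6_general (n : ℕ) (φ : SchwartzMap (EuclideanSpace ℝ (Fin n)) ℝ)
    (δ V : ℝ) (hδ : 1 < δ) :
    ∃ C > 0, ∀ (a : ℤ → ℝ) (v : ℤ → ℂ),
      (∀ i, 0 < a i) → (∀ i, δ ≤ a (i + 1) / a i) → (∀ i, ‖v i‖ ≤ V) →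
      ∀ N₁ N₂ : ℤ, N₁ < N₂ → ∀ y : EuclideanSpace ℝ (Fin n), y ≠ 0 →
        ‖∑ i ∈ Finset.Icc N₁ N₂,
            v i * ((schwartzDil φ (a (i + 1)) y - schwartzDil φ (a i) y : ℝ) : ℂ)‖
          ≤ C / ‖y‖ ^ n := by
  set K := SchwartzMap.seminorm ℝ 0 0 φ + SchwartzMap.seminorm ℝ (n + 1) 0 φ
  have hK : 0 ≤ K := add_nonneg (apply_nonneg _ _) (apply_nonneg _ _)
  have hG : 0 < 1 - δ⁻¹ := sub_pos.2 (inv_lt_one_of_one_lt₀ hδ)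
  refine ⟨|V| * K * (4 * (1 - δ⁻¹)⁻¹) + 1, by positivity, ?_⟩
  intro a v ha_pos ha_div hv N₁ N₂ _ y hy
  calc _ ≤ |V| * K * (4 * (1 - δ⁻¹)⁻¹) / ‖y‖ ^ n :=
        norm_sum_schwartzDil_sub_le φ hδ ⟨ha_pos, ha_div⟩ (fun i ↦ (hv i).trans (le_abs_self V))
          _ hy
    _ ≤ _ := by gcongr; linarith

theorem stmt6 (n : ℕ) (φ : SchwartzMap (EuclideanSpace ℝ (Fin n)) ℝ)
    (δ V : ℝ) (hδ : 1 < δ) (hV : 0 ≤ V) :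
    ∃ C > 0, ∀ (a : ℤ → ℝ) (v : ℤ → ℂ),
      (∀ i, 0 < a i) → (∀ i, δ ≤ a (i + 1) / a i) → (∀ i, ‖v i‖ ≤ V) →
      ∀ N₁ N₂ : ℤ, N₁ < N₂ → ∀ y : EuclideanSpace ℝ (Fin n), y ≠ 0 →
        ‖∑ i ∈ Finset.Icc N₁ N₂,
            v i * ((schwartzDil φ (a (i + 1)) y - schwartzDil φ (a i) y : ℝ) : ℂ)‖
          ≤ C / ‖y‖ ^ n :=
  stmt6_general n φ δ V hδ
end

section
/- Let φ be a Schwartz function on ℝⁿ, {a_i}_{i∈ℤ} a δ-lacunary sequence of positive numbers, and {v_i}_{i∈ℤ} a bounded sequence of complex numbers. There exists C > 0 depending only on n, φ, and ‖v‖_{ℓ∞} such that for all integers N₁ < N₂ and all y ≠ 0, |∇K_N(y)| ≤ C / |y|^{n+1}, where K_N(y) := ∑_{i=N₁}^{N₂} v_i(φ_{a_{i+1}}(y) − φ_{a_i}(y)). -/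
/-!
Differentiating the dilation gives `∇φ_t(y) = t^{-n-1} (∇φ)(y/t)`, and the Schwartz decay of `∇φ`
at `0` and at infinity turns this into `|∇φ_t(y)| ≲ |y|^{-n-1} min(t/|y|, |y|/t)`. Summing over a
lacunary family of scales, the terms with `a_i ≤ |y|` and those with `a_i > |y|` are each dominated
by a geometric series in `δ⁻¹`, so the sum of the minima is bounded independently of `y` and of
`N₁`, `N₂`.
-/

open MeasureTheory Metric Finset

lemma sum_pow_le_of_injOn {ι : Type*} {q : ℝ} (hq0 : 0 ≤ q) (hq1 : q < 1) (S : Finset ι)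
    (k : ι → ℕ) (hk : Set.InjOn k S) : ∑ i ∈ S, q ^ k i ≤ (1 - q)⁻¹ := by
  rw [← sum_image hk, ← tsum_geometric_of_lt_one hq0 hq1]
  exact (summable_geometric_of_lt_one hq0 hq1).sum_le_tsum _ fun m _ => pow_nonneg hq0 m

section Lacunary

variable {δ : ℝ} {a : ℤ → ℝ}

lemma pow_mul_le_of_lacunary (hδ : 0 ≤ δ) (ha : ∀ i, 0 < a i) (hl : ∀ i, δ ≤ a (i + 1) / a i)
    (k : ℕ) (i : ℤ) : δ ^ k * a i ≤ a (i + k) := by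
  induction k with
  | zero => simp
  | succ k ih =>
    have hstep : δ * a (i + k) ≤ a (i + k + 1) := (le_div_iff₀ (ha _)).mp (hl _)
    calc δ ^ (k + 1) * a i = δ * (δ ^ k * a i) := by ring
      _ ≤ δ * a (i + k) := by gcongr
      _ ≤ a (i + (k + 1 : ℕ)) := by push_cast; rwa [← add_assoc]

lemma div_le_inv_pow_of_lacunary (hδ : 0 < δ) (ha : ∀ i, 0 < a i)
    (hl : ∀ i, δ ≤ a (i + 1) / a i) {i j : ℤ} (hij : i ≤ j) :
    a i / a j ≤ δ⁻¹ ^ (j - i).toNat := by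
  have h := pow_mul_le_of_lacunary hδ.le ha hl (j - i).toNat i
  rw [Int.toNat_of_nonneg (by omega), add_sub_cancel] at h
  rw [div_le_iff₀ (ha j), inv_pow, inv_mul_eq_div, le_div_iff₀ (by positivity), mul_comm]
  exact h

lemma sum_min_div_div_le_of_lacunary (hδ : 1 < δ) (ha : ∀ i, 0 < a i)
    (hl : ∀ i, δ ≤ a (i + 1) / a i) (r : ℝ) (S : Finset ℤ) :
    ∑ i ∈ S, min (a i / r) (r / a i) ≤ 2 * (1 - δ⁻¹)⁻¹ := by
  have hδ0 : 0 < δ := one_pos.trans hδ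
  have hq0 : 0 ≤ δ⁻¹ := inv_nonneg.mpr hδ0.le
  have hq1 : δ⁻¹ < 1 := inv_lt_one_of_one_lt₀ hδ
  have hgeom : 0 ≤ (1 - δ⁻¹)⁻¹ := inv_nonneg.mpr (by linarith)
  rw [← sum_filter_add_sum_filter_not S (a · ≤ r), two_mul]
  apply add_le_add
  · set T := S.filter (a · ≤ r)
    rcases T.eq_empty_or_nonempty with hT | hT
    · simpa [hT] using hgeom
    set j := T.max' hT
    have haj : a j ≤ r := (mem_filter.mp (T.max'_mem hT)).2
    calc ∑ i ∈ T, min (a i / r) (r / a i) ≤ ∑ i ∈ T, δ⁻¹ ^ (j - i).toNat :=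
          sum_le_sum fun i hi => (min_le_left _ _).trans <|
            (div_le_div_of_nonneg_left (ha i).le (ha j) haj).trans
              (div_le_inv_pow_of_lacunary hδ0 ha hl (T.le_max' i hi))
      _ ≤ (1 - δ⁻¹)⁻¹ := sum_pow_le_of_injOn hq0 hq1 T _ fun x hx y hy hxy => by
          have := T.le_max' x hx; have := T.le_max' y hy; omega
  · set T := S.filter (¬a · ≤ r)
    rcases T.eq_empty_or_nonempty with hT | hT
    · simpa [hT] using hgeom
    set j := T.min' hT
    have haj : r ≤ a j := (not_le.mp (mem_filter.mp (T.min'_mem hT)).2).le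
    calc ∑ i ∈ T, min (a i / r) (r / a i) ≤ ∑ i ∈ T, δ⁻¹ ^ (i - j).toNat :=
          sum_le_sum fun i hi => (min_le_right _ _).trans <|
            (div_le_div_of_nonneg_right haj (ha i).le).trans
              (div_le_inv_pow_of_lacunary hδ0 ha hl (T.min'_le i hi))
      _ ≤ (1 - δ⁻¹)⁻¹ := sum_pow_le_of_injOn hq0 hq1 T _ fun x hx y hy hxy => by
          have := T.min'_le x hx; have := T.min'_le y hy; omega

end Lacunary

lemma SchwartzMap.pow_mul_norm_fderiv_le {E F : Type*} [NormedAddCommGroup E] [NormedSpace ℝ E]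
    [NormedAddCommGroup F] [NormedSpace ℝ F] (φ : SchwartzMap E F) (k : ℕ) (x : E) :
    ‖x‖ ^ (k + 1) * ‖fderiv ℝ φ x‖ ≤
      (SchwartzMap.seminorm ℝ 0 1 φ + SchwartzMap.seminorm ℝ (k + 2) 1 φ) * min ‖x‖ ‖x‖⁻¹ := by
  have h0 := SchwartzMap.le_seminorm ℝ 0 1 φ x
  have h2 := SchwartzMap.le_seminorm ℝ (k + 2) 1 φ x
  simp only [norm_iteratedFDeriv_one, pow_zero, one_mul] at h0 h2
  have hs0 : 0 ≤ SchwartzMap.seminorm ℝ 0 1 φ := apply_nonneg _ _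
  have hs2 : 0 ≤ SchwartzMap.seminorm ℝ (k + 2) 1 φ := apply_nonneg _ _
  rcases le_total ‖x‖ 1 with hx | hx
  · have hmin : min ‖x‖ ‖x‖⁻¹ = ‖x‖ := by
      rcases (norm_nonneg x).eq_or_lt with h | h
      · simp [← h]
      · exact min_eq_left (hx.trans ((one_le_inv₀ h).mpr hx))
    rw [hmin, pow_succ']
    calc ‖x‖ * ‖x‖ ^ k * ‖fderiv ℝ φ x‖ ≤ ‖x‖ * 1 * SchwartzMap.seminorm ℝ 0 1 φ := by
          gcongr; exact pow_le_one₀ (norm_nonneg x) hx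
      _ ≤ _ := by nlinarith [norm_nonneg x]
  · have hx0 : 0 < ‖x‖ := one_pos.trans_le hx
    rw [min_eq_right ((inv_le_one_of_one_le₀ hx).trans hx)]
    calc ‖x‖ ^ (k + 1) * ‖fderiv ℝ φ x‖ = ‖x‖ ^ (k + 2) * ‖fderiv ℝ φ x‖ * ‖x‖⁻¹ := by
          field_simp; ring
      _ ≤ _ := by gcongr; linarith

section Dilation

variable {n : ℕ} (φ : SchwartzMap (EuclideanSpace ℝ (Fin n)) ℝ)

@[fun_prop]
lemma differentiable_schwartzDil (t : ℝ) : Differentiable ℝ (schwartzDil φ t) := by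
  unfold schwartzDil; fun_prop

lemma norm_fderiv_schwartzDil {t : ℝ} (ht : 0 < t) (y : EuclideanSpace ℝ (Fin n)) :
    ‖fderiv ℝ (schwartzDil φ t) y‖ = (t ^ (n + 1))⁻¹ * ‖fderiv ℝ φ (t⁻¹ • y)‖ := by
  have hcomp : DifferentiableAt ℝ (fun x => φ (t⁻¹ • x)) y := by fun_prop
  unfold schwartzDil
  rw [fderiv_const_mul hcomp, fderiv_comp_smul, norm_smul, norm_smul,
    Real.norm_of_nonneg (by positivity), Real.norm_of_nonneg (by positivity), ← mul_assoc,
    zpow_neg, zpow_natCast, ← mul_inv, ← pow_succ]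

lemma norm_fderiv_schwartzDil_le {t : ℝ} (ht : 0 < t) {y : EuclideanSpace ℝ (Fin n)}
    (hy : y ≠ 0) :
    ‖fderiv ℝ (schwartzDil φ t) y‖ ≤
      (SchwartzMap.seminorm ℝ 0 1 φ + SchwartzMap.seminorm ℝ (n + 2) 1 φ) / ‖y‖ ^ (n + 1) *
        min (t / ‖y‖) (‖y‖ / t) := by
  have hy' : 0 < ‖y‖ := norm_pos_iff.mpr hy
  have h := φ.pow_mul_norm_fderiv_le n (t⁻¹ • y)
  rw [norm_smul, Real.norm_of_nonneg (inv_nonneg.mpr ht.le), inv_mul_eq_div, inv_div,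
    min_comm] at h
  rw [norm_fderiv_schwartzDil φ ht]
  calc (t ^ (n + 1))⁻¹ * ‖fderiv ℝ φ (t⁻¹ • y)‖
      = (‖y‖ / t) ^ (n + 1) * ‖fderiv ℝ φ (t⁻¹ • y)‖ / ‖y‖ ^ (n + 1) := by
        rw [div_pow]; field_simp
    _ ≤ _ := by rw [div_mul_eq_mul_div]; gcongr

end Dilation

lemma norm_fderiv_mul_ofReal_le {E : Type*} [NormedAddCommGroup E] [NormedSpace ℝ E] {f : E → ℝ}
    {y : E} (hf : DifferentiableAt ℝ f y) (c : ℂ) :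
    ‖fderiv ℝ (fun w => c * (f w : ℂ)) y‖ ≤ ‖c‖ * ‖fderiv ℝ f y‖ := by
  have hderiv : HasFDerivAt (fun w => c * (f w : ℂ))
      (c • Complex.ofRealCLM.comp (fderiv ℝ f y)) y :=
    (Complex.ofRealCLM.hasFDerivAt.comp y hf.hasFDerivAt).const_mul c
  rw [hderiv.fderiv]
  refine (norm_smul_le c (Complex.ofRealCLM.comp (fderiv ℝ f y))).trans
    (mul_le_mul_of_nonneg_left ?_ (norm_nonneg c))
  calc ‖Complex.ofRealCLM.comp (fderiv ℝ f y)‖ ≤ ‖Complex.ofRealCLM‖ * ‖fderiv ℝ f y‖ :=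
        ContinuousLinearMap.opNorm_comp_le _ _
    _ = ‖fderiv ℝ f y‖ := by rw [Complex.ofRealCLM_norm, one_mul]

section Kernel

variable {n : ℕ} (φ : SchwartzMap (EuclideanSpace ℝ (Fin n)) ℝ)

lemma norm_fderiv_mul_schwartzDil_sub_le {c : ℂ} {V : ℝ} (hc : ‖c‖ ≤ V) {s t : ℝ} (hs : 0 < s)
    (ht : 0 < t) {y : EuclideanSpace ℝ (Fin n)} (hy : y ≠ 0) :
    ‖fderiv ℝ (fun w => c * ((schwartzDil φ s w - schwartzDil φ t w : ℝ) : ℂ)) y‖ ≤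
      V * ((SchwartzMap.seminorm ℝ 0 1 φ + SchwartzMap.seminorm ℝ (n + 2) 1 φ) /
        ‖y‖ ^ (n + 1) * (min (s / ‖y‖) (‖y‖ / s) + min (t / ‖y‖) (‖y‖ / t))) := by
  refine (norm_fderiv_mul_ofReal_le (((differentiable_schwartzDil φ s).sub
    (differentiable_schwartzDil φ t)) y) c).trans (mul_le_mul hc ?_ (norm_nonneg _)
      ((norm_nonneg c).trans hc))
  rw [fderiv_sub (differentiable_schwartzDil φ s y) (differentiable_schwartzDil φ t y), mul_add]
  exact (norm_sub_le _ _).trans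
    (add_le_add (norm_fderiv_schwartzDil_le φ hs hy) (norm_fderiv_schwartzDil_le φ ht hy))

end Kernel

theorem stmt7 (n : ℕ) (φ : SchwartzMap (EuclideanSpace ℝ (Fin n)) ℝ)
    (δ V : ℝ) (hδ : 1 < δ) (hV : 0 ≤ V) :
    ∃ C > 0, ∀ (a : ℤ → ℝ) (v : ℤ → ℂ),
      (∀ i, 0 < a i) → (∀ i, δ ≤ a (i + 1) / a i) → (∀ i, ‖v i‖ ≤ V) →
      ∀ N₁ N₂ : ℤ, N₁ < N₂ → ∀ y : EuclideanSpace ℝ (Fin n), y ≠ 0 →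
        ‖fderiv ℝ (fun w : EuclideanSpace ℝ (Fin n) =>
            ∑ i ∈ Finset.Icc N₁ N₂,
              v i * ((schwartzDil φ (a (i + 1)) w - schwartzDil φ (a i) w : ℝ) : ℂ)) y‖
          ≤ C / ‖y‖ ^ (n + 1) := by
  set M := SchwartzMap.seminorm ℝ 0 1 φ + SchwartzMap.seminorm ℝ (n + 2) 1 φ
  set K := 2 * (1 - δ⁻¹)⁻¹
  have hM : 0 ≤ M := add_nonneg (apply_nonneg _ _) (apply_nonneg _ _)
  have hK : 0 ≤ K := by have := inv_lt_one_of_one_lt₀ hδ; positivity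
  refine ⟨V * M * (2 * K) + 1, by positivity, fun a v ha hl hv N₁ N₂ _ y hy => ?_⟩
  rw [fderiv_fun_sum fun i _ => by fun_prop]
  calc _ ≤ ∑ i ∈ Icc N₁ N₂, V * (M / ‖y‖ ^ (n + 1) *
          (min (a (i + 1) / ‖y‖) (‖y‖ / a (i + 1)) + min (a i / ‖y‖) (‖y‖ / a i))) :=
        (norm_sum_le _ _).trans <| sum_le_sum fun i _ =>
          norm_fderiv_mul_schwartzDil_sub_le φ (hv i) (ha _) (ha i) hy
    _ = V * (M / ‖y‖ ^ (n + 1)) * (∑ i ∈ Icc N₁ N₂, min (a (i + 1) / ‖y‖) (‖y‖ / a (i + 1)) +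
          ∑ i ∈ Icc N₁ N₂, min (a i / ‖y‖) (‖y‖ / a i)) := by
        simp only [← sum_add_distrib, mul_sum, mul_assoc]
    _ ≤ V * (M / ‖y‖ ^ (n + 1)) * (K + K) := by
        gcongr
        · exact sum_min_div_div_le_of_lacunary hδ (fun i => ha _) (fun i => hl _) _ _
        · exact sum_min_div_div_le_of_lacunary hδ ha hl _ _
    _ = V * M * (2 * K) / ‖y‖ ^ (n + 1) := by ring
    _ ≤ (V * M * (2 * K) + 1) / ‖y‖ ^ (n + 1) := by gcongr; linarith
end

section
/- Let g := 𝓕φ be the Fourier transform of a Schwartz function φ on ℝⁿ. Then there exists a constant C such that for all ξ ∈ ℝⁿ, ∫₀^∞ |∇g(tξ) · ξ| dt ≤ C. -/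
/-!
The derivative of a Schwartz function `ψ` satisfies `‖Dψ(x)‖ ≤ C / (1 + ‖x‖²)`, hence
`‖Dψ(tξ) ξ‖ ≤ C ‖ξ‖ / (1 + (t‖ξ‖)²)`. The substitution `s = t‖ξ‖` turns the integral of the right
side over `t > 0` into `C ∫₀^∞ ds / (1 + s²) = C π / 2`, a bound independent of `ξ`.
-/

open MeasureTheory Real Set

theorem SchwartzMap.exists_norm_fderiv_le_mul_inv_one_add_sq {E F : Type*}
    [NormedAddCommGroup E] [NormedSpace ℝ E] [NormedAddCommGroup F] [NormedSpace ℝ F]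
    (f : SchwartzMap E F) : ∃ C : ℝ, ∀ x, ‖fderiv ℝ f x‖ ≤ C * (1 + ‖x‖ ^ 2)⁻¹ := by
  refine ⟨2 ^ 2 * (Finset.Iic (2, 1)).sup (fun m => SchwartzMap.seminorm ℝ m.1 m.2) f,
    fun x => ?_⟩
  have hdecay := one_add_le_sup_seminorm_apply (𝕜 := ℝ) (m := (2, 1)) le_rfl le_rfl f x
  rw [norm_iteratedFDeriv_one] at hdecay
  dsimp only at hdecay
  rw [← div_eq_mul_inv, le_div_iff₀ (by positivity), mul_comm]
  refine le_trans ?_ hdecay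
  gcongr
  nlinarith [norm_nonneg x]

theorem integral_Ioi_mul_inv_one_add_mul_sq {r : ℝ} (hr : 0 < r) :
    ∫ t in Ioi 0, r * (1 + (r * t) ^ 2)⁻¹ = π / 2 := by
  rw [integral_const_mul, integral_comp_mul_left_Ioi (fun t => (1 + t ^ 2)⁻¹) 0 hr]
  simp [hr.ne']

theorem integrable_mul_inv_one_add_mul_sq {r : ℝ} (hr : r ≠ 0) :
    Integrable fun t : ℝ => r * (1 + (r * t) ^ 2)⁻¹ :=
  (integrable_inv_one_add_sq.comp_mul_left' hr).const_mul r

theorem setIntegral_Ioi_norm_apply_smul_le {E F : Type*}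
    [NormedAddCommGroup E] [NormedSpace ℝ E] [NormedAddCommGroup F] [NormedSpace ℝ F]
    {G : E → E →L[ℝ] F} {C : ℝ} (hG : ∀ x, ‖G x‖ ≤ C * (1 + ‖x‖ ^ 2)⁻¹) (ξ : E) :
    ∫ t in Ioi (0 : ℝ), ‖G (t • ξ) ξ‖ ≤ C * (π / 2) := by
  have hC : 0 ≤ C := by simpa using (norm_nonneg _).trans (hG 0)
  rcases eq_or_ne ξ 0 with rfl | hξ
  · simp only [smul_zero, map_zero, norm_zero, integral_zero]
    positivity
  have hr : 0 < ‖ξ‖ := norm_pos_iff.mpr hξ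
  have hbound : ∀ t : ℝ, ‖G (t • ξ) ξ‖ ≤ C * (‖ξ‖ * (1 + (‖ξ‖ * t) ^ 2)⁻¹) := fun t =>
    calc ‖G (t • ξ) ξ‖ ≤ ‖G (t • ξ)‖ * ‖ξ‖ := (G (t • ξ)).le_opNorm ξ
      _ ≤ C * (1 + ‖t • ξ‖ ^ 2)⁻¹ * ‖ξ‖ := by gcongr; exact hG _
      _ = C * (‖ξ‖ * (1 + (‖ξ‖ * t) ^ 2)⁻¹) := by
        rw [norm_smul, Real.norm_eq_abs, mul_pow, sq_abs]; ring
  calc ∫ t in Ioi (0 : ℝ), ‖G (t • ξ) ξ‖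
      ≤ ∫ t in Ioi 0, C * (‖ξ‖ * (1 + (‖ξ‖ * t) ^ 2)⁻¹) :=
        integral_mono_of_nonneg (.of_forall fun _ => norm_nonneg _)
          ((integrable_mul_inv_one_add_mul_sq hr.ne').const_mul C).integrableOn
          (.of_forall hbound)
    _ = C * (π / 2) := by rw [integral_const_mul, integral_Ioi_mul_inv_one_add_mul_sq hr]

theorem stmt9 (n : ℕ) (φ : SchwartzMap (EuclideanSpace ℝ (Fin n)) ℂ) :
    ∃ C : ℝ, ∀ ξ : EuclideanSpace ℝ (Fin n),
      ∫ t in Set.Ioi (0 : ℝ),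
        ‖fderiv ℝ (fun x => SchwartzMap.fourierTransformCLM ℂ φ x) (t • ξ) ξ‖ ≤ C := by
  obtain ⟨C, hC⟩ :=
    (SchwartzMap.fourierTransformCLM ℂ φ).exists_norm_fderiv_le_mul_inv_one_add_sq
  exact ⟨C * (π / 2), setIntegral_Ioi_norm_apply_smul_le hC⟩
end

section
/- Let φ be a Schwartz function on ℝⁿ, {a_i}_{i∈ℤ} a sequence with 1 < δ ≤ a_{i+1}/a_i ≤ δ² for all i, and {v_i} a bounded complex sequence. Then there exists C > 0 depending on n, φ, δ, ‖v‖_{ℓ∞} such that for all integers m ≤ M and all x, y ∈ ℝⁿ, |∑_{i=m}^{M} v_i (φ_{a_{i+1}}(x−y) − φ_{a_i}(x−y))| ≤ C / a_m^n. -/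
/-!
Since `|φ_t| ≤ ‖φ‖_∞ t^{-n}`, the `i`-th summand is at most `2 V ‖φ‖_∞ a_i^{-n}`, and lacunarity
gives `a_{m+k} ≥ δ^k a_m`. The summands are thus dominated by the geometric series
`2 V ‖φ‖_∞ a_m^{-n} ∑_k δ^{-nk}`, which converges once `n > 0`; in dimension `0` every `φ_t` is
the same constant and the sum vanishes.
-/

open MeasureTheory Metric Finset

section Dilation

variable {n : ℕ} (φ : SchwartzMap (EuclideanSpace ℝ (Fin n)) ℝ)

theorem norm_schwartzDil_le {t : ℝ} (ht : 0 < t) (z : EuclideanSpace ℝ (Fin n)) :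
    ‖schwartzDil φ t z‖ ≤ ‖φ.toBoundedContinuousFunction‖ / t ^ n := by
  rw [schwartzDil, norm_mul, Real.norm_of_nonneg (zpow_pos ht _).le, zpow_neg, zpow_natCast,
    inv_mul_eq_div]
  gcongr
  exact φ.toBoundedContinuousFunction.norm_coe_le_norm _

theorem norm_schwartzDil_sub_le {s t : ℝ} (hs : 0 < s) (hst : s ≤ t)
    (z : EuclideanSpace ℝ (Fin n)) :
    ‖schwartzDil φ t z - schwartzDil φ s z‖ ≤ 2 * ‖φ.toBoundedContinuousFunction‖ / s ^ n :=
  calc ‖schwartzDil φ t z - schwartzDil φ s z‖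
      ≤ ‖schwartzDil φ t z‖ + ‖schwartzDil φ s z‖ := norm_sub_le _ _
    _ ≤ ‖φ.toBoundedContinuousFunction‖ / t ^ n + ‖φ.toBoundedContinuousFunction‖ / s ^ n :=
        add_le_add (norm_schwartzDil_le φ (hs.trans_le hst) z) (norm_schwartzDil_le φ hs z)
    _ ≤ ‖φ.toBoundedContinuousFunction‖ / s ^ n + ‖φ.toBoundedContinuousFunction‖ / s ^ n := by
        gcongr
    _ = 2 * ‖φ.toBoundedContinuousFunction‖ / s ^ n := by ring

end Dilation

theorem schwartzDil_of_finZero (φ : SchwartzMap (EuclideanSpace ℝ (Fin 0)) ℝ) (t : ℝ)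
    (z : EuclideanSpace ℝ (Fin 0)) : schwartzDil φ t z = φ z := by
  simp [schwartzDil, Subsingleton.elim (t⁻¹ • z) z]

theorem pow_mul_le_add_of_mul_le_succ {a : ℤ → ℝ} {δ : ℝ} (hδ : 0 ≤ δ)
    (hstep : ∀ i, δ * a i ≤ a (i + 1)) (m : ℤ) : ∀ k : ℕ, δ ^ k * a m ≤ a (m + k)
  | 0 => by simp
  | k + 1 =>
    calc δ ^ (k + 1) * a m = δ * (δ ^ k * a m) := by ring
      _ ≤ δ * a (m + k) := mul_le_mul_of_nonneg_left (pow_mul_le_add_of_mul_le_succ hδ hstep m k) hδ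
      _ ≤ a (m + (k + 1 : ℕ)) := by simpa [add_assoc] using hstep (m + k)

theorem sum_Icc_le_of_le_geometric {f : ℤ → ℝ} {c r : ℝ} (hc : 0 ≤ c) (hr₀ : 0 ≤ r)
    (hr₁ : r < 1) {m : ℤ} (hf : ∀ k : ℕ, f (m + k) ≤ c * r ^ k) (M : ℤ) :
    ∑ i ∈ Icc m M, f i ≤ c / (1 - r) := by
  rw [Int.Icc_eq_finset_map, sum_map]
  calc ∑ k ∈ range (M + 1 - m).toNat, f (m + k)
      ≤ ∑ k ∈ range (M + 1 - m).toNat, c * r ^ k := sum_le_sum fun k _ => hf k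
    _ = c * ∑ k ∈ Ico 0 (M + 1 - m).toNat, r ^ k := by rw [mul_sum, range_eq_Ico]
    _ ≤ c * (r ^ 0 / (1 - r)) := by gcongr; exact geom_sum_Ico_le_of_lt_one hr₀ hr₁
    _ = c / (1 - r) := by ring

theorem norm_sum_mul_schwartzDil_sub_le {n : ℕ} (hn : 0 < n)
    (φ : SchwartzMap (EuclideanSpace ℝ (Fin n)) ℝ) {δ V : ℝ} (hδ : 1 < δ) (hV : 0 ≤ V)
    {a : ℤ → ℝ} {v : ℤ → ℂ} (ha : ∀ i, 0 < a i) (hstep : ∀ i, δ * a i ≤ a (i + 1))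
    (hv : ∀ i, ‖v i‖ ≤ V) (m M : ℤ) (z : EuclideanSpace ℝ (Fin n)) :
    ‖∑ i ∈ Icc m M, v i * ((schwartzDil φ (a (i + 1)) z - schwartzDil φ (a i) z : ℝ) : ℂ)‖
      ≤ 2 * V * ‖φ.toBoundedContinuousFunction‖ / (1 - (δ ^ n)⁻¹) / a m ^ n := by
  set B := ‖φ.toBoundedContinuousFunction‖
  have hδn : 1 < δ ^ n := one_lt_pow₀ hδ hn.ne'
  have hterm : ∀ k : ℕ,
      ‖v (m + k) * ((schwartzDil φ (a (m + k + 1)) z - schwartzDil φ (a (m + k)) z : ℝ) : ℂ)‖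
        ≤ 2 * V * B / a m ^ n * (δ ^ n)⁻¹ ^ k := by
    intro k
    have hgrow : δ ^ k * a m ≤ a (m + k) :=
      pow_mul_le_add_of_mul_le_succ (by linarith) hstep m k
    have hmono : a (m + k) ≤ a (m + k + 1) := by nlinarith [hstep (m + k), ha (m + k)]
    rw [norm_mul, Complex.norm_real]
    calc ‖v (m + k)‖ * ‖schwartzDil φ (a (m + k + 1)) z - schwartzDil φ (a (m + k)) z‖
        ≤ V * (2 * B / a (m + k) ^ n) :=
          mul_le_mul (hv _) (norm_schwartzDil_sub_le φ (ha _) hmono z) (norm_nonneg _) hV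
      _ ≤ V * (2 * B / (δ ^ k * a m) ^ n) := by
          have := ha m
          gcongr
      _ = 2 * V * B / a m ^ n * (δ ^ n)⁻¹ ^ k := by
          rw [mul_pow, ← pow_mul, inv_pow, ← pow_mul, mul_comm k n]
          field_simp
  calc _ ≤ ∑ i ∈ Icc m M,
        ‖v i * ((schwartzDil φ (a (i + 1)) z - schwartzDil φ (a i) z : ℝ) : ℂ)‖ := norm_sum_le _ _
    _ ≤ 2 * V * B / a m ^ n / (1 - (δ ^ n)⁻¹) :=
        sum_Icc_le_of_le_geometric (by have := ha m; positivity) (by positivity)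
          (inv_lt_one_of_one_lt₀ hδn) hterm M
    _ = 2 * V * B / (1 - (δ ^ n)⁻¹) / a m ^ n := div_right_comm _ _ _

theorem stmt10 (n : ℕ) (φ : SchwartzMap (EuclideanSpace ℝ (Fin n)) ℝ)
    (δ V : ℝ) (hδ : 1 < δ) (hV : 0 ≤ V) :
    ∃ C > 0, ∀ (a : ℤ → ℝ) (v : ℤ → ℂ),
      (∀ i, 0 < a i) → (∀ i, δ ≤ a (i + 1) / a i ∧ a (i + 1) / a i ≤ δ ^ 2) →
      (∀ i, ‖v i‖ ≤ V) →
      ∀ m M : ℤ, m ≤ M → ∀ x y : EuclideanSpace ℝ (Fin n),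
        ‖∑ i ∈ Finset.Icc m M,
            v i * ((schwartzDil φ (a (i + 1)) (x - y) - schwartzDil φ (a i) (x - y) : ℝ) : ℂ)‖
          ≤ C / a m ^ n := by
  have hr : 0 ≤ 1 - (δ ^ n)⁻¹ := sub_nonneg.2 (inv_le_one_of_one_le₀ (one_le_pow₀ hδ.le))
  refine ⟨2 * V * ‖φ.toBoundedContinuousFunction‖ / (1 - (δ ^ n)⁻¹) + 1, by positivity, ?_⟩
  intro a v ha hratio hv m M _ x y
  have hstep : ∀ i, δ * a i ≤ a (i + 1) := fun i => by
    simpa [mul_comm] using (le_div_iff₀ (ha i)).1 (hratio i).1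
  rcases n.eq_zero_or_pos with rfl | hn
  · simp [schwartzDil_of_finZero]
  · calc _ ≤ 2 * V * ‖φ.toBoundedContinuousFunction‖ / (1 - (δ ^ n)⁻¹) / a m ^ n :=
          norm_sum_mul_schwartzDil_sub_le hn φ hδ hV ha hstep hv m M (x - y)
      _ ≤ _ := by have := ha m; gcongr; linarith
end

section
/- Let {a_i}_{i∈ℤ} be a δ-lacunary sequence of positive numbers (a_{i+1}/a_i ≥ δ > 1) and {v_i}_{i∈ℤ} a bounded complex sequence. Then there exist a sequence {b_j}_{j∈ℤ} with 1 < δ ≤ b_{j+1}/b_j ≤ δ² for all j and a complex sequence {w_j}_{j∈ℤ} with ‖w‖_{ℓ∞} = ‖v‖_{ℓ∞} such that for every pair of integers N₁ < N₂ there exist integers N₁' < N₂' with ∑_{i=N₁}^{N₂} v_i (φ_{a_{i+1}} * f − φ_{a_i} * f) = ∑_{j=N₁'}^{N₂'} w_j (φ_{b_{j+1}} * f − φ_{b_j} * f) for all f ∈ L^p(ℝⁿ). -/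
/-!
Each ratio `a (i + 1) / a i ≥ δ` is split into `k_i ≥ 1` equal geometric factors
`ρ_i = (a (i + 1) / a i) ^ (1 / k_i)`, with `k_i` maximal such that `δ ^ k_i` does not exceed the
ratio; then `δ ≤ ρ_i ≤ δ ^ 2`. The refined sequence `b` runs through the blocks
`b (σ i + m) = a i * ρ_i ^ m`, `0 ≤ m < k_i`, where `σ` is the cumulative sum of the `k_i`, so that
`b ∘ σ = a`, and `w` is constant, equal to `v i`, on the `i`-th block. On each block the differences
`F (b (j + 1)) - F (b j)` telescope to `F (a (i + 1)) - F (a i)`, whatever `F` is; here `F t` is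
the convolution `(φ_t * f)(x)`. Every `v i` occurs among the `w j`, so the suprema agree.
-/

open MeasureTheory Metric Finset
open scoped ENNReal

section CumulativeSum

variable {M : Type*} [AddCommGroup M]

noncomputable def cumulativeSum (K : ℤ → M) (i : ℤ) : M :=
  ∑ j ∈ Ico 0 i, K j - ∑ j ∈ Ico i 0, K j

theorem cumulativeSum_add_one (K : ℤ → M) (i : ℤ) :
    cumulativeSum K (i + 1) = cumulativeSum K i + K i := by
  unfold cumulativeSum
  rcases le_or_gt 0 i with hi | hi
  · rw [← insert_Ico_right_eq_Ico_add_one hi, sum_insert right_notMem_Ico,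
      Ico_eq_empty_of_le hi, Ico_eq_empty_of_le (show (0 : ℤ) ≤ i + 1 by omega)]
    abel
  · rw [← insert_Ico_add_one_left_eq_Ico hi, sum_insert (by simp),
      Ico_eq_empty_of_le hi.le, Ico_eq_empty_of_le (show i + 1 ≤ 0 by omega)]
    abel

theorem strictMono_cumulativeSum [PartialOrder M] [IsOrderedAddMonoid M] {K : ℤ → M}
    (hK : ∀ i, 0 < K i) : StrictMono (cumulativeSum K) :=
  strictMono_int_of_lt_succ fun i => by
    rw [cumulativeSum_add_one]
    exact lt_add_of_pos_right _ (hK i)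

end CumulativeSum

theorem StrictMono.sub_le_apply_sub {σ : ℤ → ℤ} (hσ : StrictMono σ) {i i' : ℤ} (h : i ≤ i') :
    i' - i ≤ σ i' - σ i := by
  induction i', h using Int.leInduction with
  | base => simp
  | succ m _ ih => have := hσ (lt_add_one m); omega

-- For strictly monotone `σ`, the index `i` of the block `[σ i, σ (i + 1))` containing `j`.
noncomputable def blockIndex (σ : ℤ → ℤ) (j : ℤ) : ℤ :=
  sSup {i | σ i ≤ j}

section BlockIndex

variable {σ : ℤ → ℤ}

theorem blockIndex_eq (hσ : StrictMono σ) {i j : ℤ} (h₁ : σ i ≤ j) (h₂ : j < σ (i + 1)) :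
    blockIndex σ j = i := by
  refine IsGreatest.csSup_eq ⟨h₁, fun i' hi' => ?_⟩
  by_contra! h
  exact ((hσ.monotone (Int.add_one_le_of_lt h)).trans hi').not_gt h₂

theorem exists_apply_le_lt_apply_add_one (hσ : StrictMono σ) (j : ℤ) :
    ∃ i, σ i ≤ j ∧ j < σ (i + 1) := by
  have hbdd : ∃ u, ∀ i, σ i ≤ j → i ≤ u :=
    ⟨max 0 (j - σ 0), fun i hi => by
      by_contra! h
      have := hσ.sub_le_apply_sub (i := 0) (i' := i) (by omega)
      omega⟩
  have hne : ∃ i, σ i ≤ j :=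
    ⟨min 0 (j - σ 0), by
      have := hσ.sub_le_apply_sub (min_le_left 0 (j - σ 0))
      omega⟩
  obtain ⟨i, hi, hmax⟩ := Int.exists_greatest_of_bdd hbdd hne
  exact ⟨i, hi, not_le.mp fun h => by have := hmax _ h; omega⟩

theorem apply_blockIndex_le (hσ : StrictMono σ) (j : ℤ) : σ (blockIndex σ j) ≤ j := by
  obtain ⟨i, h₁, h₂⟩ := exists_apply_le_lt_apply_add_one hσ j
  rwa [blockIndex_eq hσ h₁ h₂]

theorem lt_apply_blockIndex_add_one (hσ : StrictMono σ) (j : ℤ) :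
    j < σ (blockIndex σ j + 1) := by
  obtain ⟨i, h₁, h₂⟩ := exists_apply_le_lt_apply_add_one hσ j
  rwa [blockIndex_eq hσ h₁ h₂]

theorem blockIndex_apply (hσ : StrictMono σ) (i : ℤ) : blockIndex σ (σ i) = i :=
  blockIndex_eq hσ le_rfl (hσ (lt_add_one i))

theorem blockIndex_surjective (hσ : StrictMono σ) : Function.Surjective (blockIndex σ) :=
  fun i => ⟨σ i, blockIndex_apply hσ i⟩

theorem sum_Ico_apply_eq_sum_sum_Ico {M : Type*} [AddCommMonoid M] (hσ : Monotone σ)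
    (g : ℤ → M) {N N' : ℤ} (h : N ≤ N') :
    ∑ j ∈ Ico (σ N) (σ N'), g j = ∑ i ∈ Ico N N', ∑ j ∈ Ico (σ i) (σ (i + 1)), g j := by
  induction N', h using Int.leInduction with
  | base => simp
  | succ m hm ih =>
    rw [← insert_Ico_right_eq_Ico_add_one hm, sum_insert right_notMem_Ico,
      ← Ico_union_Ico_eq_Ico (hσ hm) (hσ (lt_add_one m).le),
      sum_union (Ico_disjoint_Ico_consecutive _ _ _), ih, add_comm]

end BlockIndex

theorem sum_Ico_int_sub {M : Type*} [AddCommGroup M] (G : ℤ → M) {m m' : ℤ} (h : m ≤ m') :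
    ∑ j ∈ Ico m m', (G (j + 1) - G j) = G m' - G m := by
  induction m', h using Int.leInduction with
  | base => simp
  | succ k hk ih =>
    rw [← insert_Ico_right_eq_Ico_add_one hk, sum_insert right_notMem_Ico, ih]
    abel

theorem sum_Ico_blockIndex_mul_sub {R : Type*} [Ring R] {σ : ℤ → ℤ} (hσ : StrictMono σ)
    (v G : ℤ → R) {N N' : ℤ} (h : N ≤ N') :
    ∑ j ∈ Ico (σ N) (σ N'), v (blockIndex σ j) * (G (j + 1) - G j)
      = ∑ i ∈ Ico N N', v i * (G (σ (i + 1)) - G (σ i)) := by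
  rw [sum_Ico_apply_eq_sum_sum_Ico hσ.monotone _ h]
  refine sum_congr rfl fun i _ => ?_
  rw [← sum_Ico_int_sub G (hσ (lt_add_one i)).le, mul_sum]
  refine sum_congr rfl fun j hj => ?_
  rw [blockIndex_eq hσ (mem_Ico.1 hj).1 (mem_Ico.1 hj).2]

section GeomInterp

variable {𝕜 : Type*} [DivisionRing 𝕜] {σ : ℤ → ℤ} {a ρ : ℤ → 𝕜}

noncomputable def geomInterp (σ : ℤ → ℤ) (a ρ : ℤ → 𝕜) (j : ℤ) : 𝕜 :=
  a (blockIndex σ j) * ρ (blockIndex σ j) ^ (j - σ (blockIndex σ j))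

theorem geomInterp_apply (hσ : StrictMono σ) (i : ℤ) : geomInterp σ a ρ (σ i) = a i := by
  simp [geomInterp, blockIndex_apply hσ]

theorem geomInterp_eq (hσ : StrictMono σ) (hρ : ∀ i, a i * ρ i ^ (σ (i + 1) - σ i) = a (i + 1))
    {i j : ℤ} (h₁ : σ i ≤ j) (h₂ : j ≤ σ (i + 1)) :
    geomInterp σ a ρ j = a i * ρ i ^ (j - σ i) := by
  rcases h₂.lt_or_eq with h₂ | rfl
  · simp only [geomInterp, blockIndex_eq hσ h₁ h₂]
  · rw [geomInterp_apply hσ, hρ]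

end GeomInterp

theorem geomInterp_add_one_div {𝕜 : Type*} [Field 𝕜] {σ : ℤ → ℤ} {a ρ : ℤ → 𝕜} (hσ : StrictMono σ)
    (hρ : ∀ i, a i * ρ i ^ (σ (i + 1) - σ i) = a (i + 1)) (ha : ∀ i, a i ≠ 0)
    (hρ₀ : ∀ i, ρ i ≠ 0) (j : ℤ) :
    geomInterp σ a ρ (j + 1) / geomInterp σ a ρ j = ρ (blockIndex σ j) := by
  have h₁ := apply_blockIndex_le hσ j
  have h₂ := lt_apply_blockIndex_add_one hσ j
  rw [geomInterp_eq hσ hρ h₁ h₂.le, geomInterp_eq hσ hρ (by omega) h₂,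
    show j + 1 - σ (blockIndex σ j) = j - σ (blockIndex σ j) + 1 by ring,
    zpow_add_one₀ (hρ₀ _)]
  field_simp [ha, hρ₀]

theorem geomInterp_pos {𝕜 : Type*} [Field 𝕜] [LinearOrder 𝕜] [IsStrictOrderedRing 𝕜]
    {σ : ℤ → ℤ} {a ρ : ℤ → 𝕜} (ha : ∀ i, 0 < a i) (hρ : ∀ i, 0 < ρ i) (j : ℤ) :
    0 < geomInterp σ a ρ j :=
  mul_pos (ha _) (zpow_pos (hρ _) _)

-- `k` is the largest exponent with `δ ^ k ≤ r`, so `r < δ ^ (k + 1) ≤ (δ ^ 2) ^ k`.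
theorem exists_pow_eq_of_le {δ r : ℝ} (hδ : 1 < δ) (hr : δ ≤ r) :
    ∃ k : ℕ, 0 < k ∧ ∃ ρ, δ ≤ ρ ∧ ρ ≤ δ ^ 2 ∧ ρ ^ k = r := by
  obtain ⟨k, hk₁, hk₂⟩ := exists_nat_pow_near (hδ.le.trans hr) hδ
  have hk : k ≠ 0 := by
    rintro rfl
    rw [zero_add, pow_one] at hk₂
    exact hk₂.not_ge hr
  have hρ : (r ^ (k⁻¹ : ℝ)) ^ k = r := Real.rpow_inv_natCast_pow (by linarith) hk
  have hρ₀ : 0 ≤ r ^ (k⁻¹ : ℝ) := Real.rpow_nonneg (by linarith) _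
  refine ⟨k, Nat.pos_of_ne_zero hk, r ^ (k⁻¹ : ℝ), ?_, ?_, hρ⟩
  · exact (pow_le_pow_iff_left₀ (by linarith) hρ₀ hk).1 (by rwa [hρ])
  · refine (pow_le_pow_iff_left₀ hρ₀ (by positivity) hk).1 ?_
    rw [hρ, ← pow_mul]
    exact hk₂.le.trans (pow_le_pow_right₀ hδ.le (by omega))

theorem exists_refinement_of_lacunary {δ : ℝ} (hδ : 1 < δ) {a : ℤ → ℝ} (ha₀ : ∀ i, 0 < a i)
    (ha : ∀ i, δ ≤ a (i + 1) / a i) :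
    ∃ σ : ℤ → ℤ, StrictMono σ ∧ ∃ b : ℤ → ℝ, (∀ j, 0 < b j) ∧
      (∀ j, δ ≤ b (j + 1) / b j ∧ b (j + 1) / b j ≤ δ ^ 2) ∧ ∀ i, b (σ i) = a i := by
  choose K hK ρ hδρ hρδ hρK using fun i => exists_pow_eq_of_le hδ (ha i)
  set σ := cumulativeSum fun i => (K i : ℤ)
  have hσ : StrictMono σ := strictMono_cumulativeSum fun i => by exact_mod_cast hK i
  have hρ₀ : ∀ i, 0 < ρ i := fun i => by linarith [hδρ i]
  have hinterp : ∀ i, a i * ρ i ^ (σ (i + 1) - σ i) = a (i + 1) := fun i => by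
    rw [show σ (i + 1) - σ i = K i by simp [σ, cumulativeSum_add_one], zpow_natCast, hρK,
      mul_div_cancel₀ _ (ha₀ i).ne']
  refine ⟨σ, hσ, geomInterp σ a ρ, geomInterp_pos ha₀ hρ₀, fun j => ?_, geomInterp_apply hσ⟩
  rw [geomInterp_add_one_div hσ hinterp (fun i => (ha₀ i).ne') (fun i => (hρ₀ i).ne')]
  exact ⟨hδρ _, hρδ _⟩

theorem stmt19_general (n : ℕ) (φ : SchwartzMap (EuclideanSpace ℝ (Fin n)) ℝ)
    (δ : ℝ) (hδ : 1 < δ)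
    (a : ℤ → ℝ) (v : ℤ → ℂ)
    (ha0 : ∀ i, 0 < a i) (ha : ∀ i, δ ≤ a (i + 1) / a i) :
    ∃ (b : ℤ → ℝ) (w : ℤ → ℂ),
      (∀ j, 0 < b j) ∧
      (∀ j, δ ≤ b (j + 1) / b j ∧ b (j + 1) / b j ≤ δ ^ 2) ∧
      (⨆ j, ‖w j‖) = (⨆ i, ‖v i‖) ∧
      ∀ N₁ N₂ : ℤ, N₁ < N₂ → ∃ N₁' N₂' : ℤ, N₁' < N₂' ∧
        ∀ (p : ℝ≥0∞) (f : EuclideanSpace ℝ (Fin n) → ℂ), 1 ≤ p →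
          MemLp f p volume → ∀ x : EuclideanSpace ℝ (Fin n),
          ∑ i ∈ Finset.Icc N₁ N₂,
              v i * ((∫ z, (schwartzDil φ (a (i + 1)) z : ℂ) * f (x - z)) -
                     ∫ z, (schwartzDil φ (a i) z : ℂ) * f (x - z))
            = ∑ j ∈ Finset.Icc N₁' N₂',
                w j * ((∫ z, (schwartzDil φ (b (j + 1)) z : ℂ) * f (x - z)) -
                       ∫ z, (schwartzDil φ (b j) z : ℂ) * f (x - z)) := by
  obtain ⟨σ, hσ, b, hb₀, hb, hbσ⟩ := exists_refinement_of_lacunary hδ ha0 ha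
  refine ⟨b, fun j => v (blockIndex σ j), hb₀, hb, ?_, fun N₁ N₂ hN => ⟨σ N₁, σ (N₂ + 1) - 1, ?_,
    fun p f _ _ x => ?_⟩⟩
  · exact congrArg sSup ((blockIndex_surjective hσ).range_comp fun i => ‖v i‖)
  · have := hσ.sub_le_apply_sub (show N₁ ≤ N₂ + 1 by omega)
    omega
  · rw [Icc_sub_one_right_eq_Ico, ← Ico_add_one_right_eq_Icc,
      sum_Ico_blockIndex_mul_sub hσ v (fun j => ∫ z, (schwartzDil φ (b j) z : ℂ) * f (x - z))
        (by omega)]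
    simp only [hbσ]

theorem stmt19 (n : ℕ) (φ : SchwartzMap (EuclideanSpace ℝ (Fin n)) ℝ)
    (hφ : ∫ x, φ x = 1) (δ : ℝ) (hδ : 1 < δ)
    (a : ℤ → ℝ) (v : ℤ → ℂ)
    (ha0 : ∀ i, 0 < a i) (ha : ∀ i, δ ≤ a (i + 1) / a i)
    (hv : BddAbove (Set.range fun i => ‖v i‖)) :
    ∃ (b : ℤ → ℝ) (w : ℤ → ℂ),
      (∀ j, 0 < b j) ∧
      (∀ j, δ ≤ b (j + 1) / b j ∧ b (j + 1) / b j ≤ δ ^ 2) ∧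
      (⨆ j, ‖w j‖) = (⨆ i, ‖v i‖) ∧
      ∀ N₁ N₂ : ℤ, N₁ < N₂ → ∃ N₁' N₂' : ℤ, N₁' < N₂' ∧
        ∀ (p : ℝ≥0∞) (f : EuclideanSpace ℝ (Fin n) → ℂ), 1 ≤ p →
          MemLp f p volume → ∀ x : EuclideanSpace ℝ (Fin n),
          ∑ i ∈ Finset.Icc N₁ N₂,
              v i * ((∫ z, (schwartzDil φ (a (i + 1)) z : ℂ) * f (x - z)) -
                     ∫ z, (schwartzDil φ (a i) z : ℂ) * f (x - z))
            = ∑ j ∈ Finset.Icc N₁' N₂',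
                w j * ((∫ z, (schwartzDil φ (b (j + 1)) z : ℂ) * f (x - z)) -
                       ∫ z, (schwartzDil φ (b j) z : ℂ) * f (x - z)) :=
  stmt19_general n φ δ hδ a v ha0 ha
end
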